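/- Let (X,d,μ) be a compact metric measure space with μ fully supported, and let r > 0 be such that sup_{x ∈ X} μ(S_r(x)) = 0, where S_r(x) = {y : d(x,y) = r}. Then the averaging operator A_r maps L^2(X,μ) into C(X) (continuous functions), is a compact operator from L^2(X,μ) to C(X) with the sup norm, and ‖A_r‖_{L^2 → C(X)} ≤ m(r)^{-1/2} where m(r) = inf_{x∈X} μ(B_r(x)). -/

import Mathlib

/-
`A_r u (x)` is the `L²` pairing of `u` with `g x = μ(B_r(x))⁻¹ 𝟙_{B_r(x)}`. Since spheres of
radius `r` are null, `μ(B_r(y) ∆ B_r(x)) → 0` as `y → x`, so `x ↦ g x` is a continuous map into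
`L²`, and `‖g x‖ = μ(B_r(x))^{-1/2} ≤ m(r)^{-1/2}`, where `m(r) > 0` by compactness and full
support. A continuous family `k : X → E →L F` of operators into a proper space on a compact `X`
defines `e ↦ (x ↦ k x e)`, an operator `E → C(X, F)` of norm at most `sup ‖k x‖`; it maps the unit
ball to a bounded equicontinuous family, so it is compact by Arzelà–Ascoli.
-/

open MeasureTheory Metric ENNReal Filter Topology
open scoped symmDiff

/-- The averaging operator `A_r u (x) = ⨍_{B_r(x)} u dμ`. -/
noncomputable def avgOp {X : Type*} [MetricSpace X] [MeasurableSpace X]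
    (μ : Measure X) (r : ℝ) (u : X → ℝ) (x : X) : ℝ :=
  ((μ (Metric.ball x r)).toReal)⁻¹ * ∫ y in Metric.ball x r, u y ∂μ

namespace ContinuousMap

variable {X : Type*} [TopologicalSpace X] [CompactSpace X]

theorem arzela_ascoli {β : Type*} [PseudoMetricSpace β] [T2Space β] (s : Set β)
    (hs : IsCompact s) (A : Set C(X, β)) (in_s : ∀ f ∈ A, ∀ x, f x ∈ s)
    (H : Equicontinuous ((↑) : A → X → β)) : IsCompact (closure A) := by
  let e := (isometryEquivBoundedOfCompact X β).toHomeomorph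
  have hA : IsCompact (closure (e '' A)) := by
    refine BoundedContinuousFunction.arzela_ascoli s hs _ ?_ fun x₀ U hU => ?_
    · rintro _ x ⟨f, hf, rfl⟩
      exact in_s f hf x
    · filter_upwards [H x₀ U hU] with x hx
      rintro ⟨_, f, hf, rfl⟩
      exact hx ⟨f, hf⟩
  rw [← e.image_closure] at hA
  simpa using hA.image e.symm.continuous

variable {𝕜 E F : Type*} [NontriviallyNormedField 𝕜] [NormedAddCommGroup E] [NormedSpace 𝕜 E]
  [NormedAddCommGroup F] [NormedSpace 𝕜 F]

noncomputable def applyCLM (k : C(X, E →L[𝕜] F)) : E →L[𝕜] C(X, F) :=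
  LinearMap.mkContinuous
    { toFun e := ⟨fun x => k x e, (ContinuousLinearMap.apply 𝕜 F e).continuous.comp k.continuous⟩
      map_add' e e' := by ext x; exact map_add (k x) e e'
      map_smul' c e := by ext x; exact map_smul (k x) c e }
    ‖k‖ fun e => (ContinuousMap.norm_le _ (by positivity)).2 fun x =>
      (k x).le_of_opNorm_le (k.norm_coe_le_norm x) e

theorem norm_applyCLM_le (k : C(X, E →L[𝕜] F)) : ‖k.applyCLM‖ ≤ ‖k‖ :=
  LinearMap.mkContinuous_norm_le _ (norm_nonneg k) _

theorem isCompactOperator_applyCLM [ProperSpace F] (k : C(X, E →L[𝕜] F)) :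
    IsCompactOperator k.applyCLM := by
  refine (isCompactOperator_iff_isCompact_closure_image_closedBall
    (k.applyCLM : E →ₗ[𝕜] C(X, F)) one_pos).2 <|
    arzela_ascoli (closedBall 0 ‖k‖) (isCompact_closedBall _ _) _ ?_ fun x₀ => ?_
  · rintro _ ⟨e, he, rfl⟩ x
    rw [mem_closedBall_zero_iff] at he ⊢
    calc ‖k x e‖ ≤ ‖k‖ * ‖e‖ := (k x).le_of_opNorm_le (k.norm_coe_le_norm x) e
      _ ≤ ‖k‖ := mul_le_of_le_one_right (norm_nonneg k) he
  · have hmod : Tendsto (fun x => ‖k x₀ - k x‖) (𝓝 x₀) (𝓝 0) := by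
      simpa using ((continuous_const.sub k.continuous).norm.tendsto x₀ :
        Tendsto (fun x => ‖k x₀ - k x‖) _ _)
    refine equicontinuousAt_of_continuity_modulus _ hmod _ (Eventually.of_forall ?_)
    rintro x ⟨_, ⟨e, he, rfl⟩⟩
    rw [mem_closedBall_zero_iff] at he
    calc dist (k x₀ e) (k x e) = ‖(k x₀ - k x) e‖ := by simp [dist_eq_norm]
      _ ≤ ‖k x₀ - k x‖ * ‖e‖ := (k x₀ - k x).le_opNorm e
      _ ≤ ‖k x₀ - k x‖ := mul_le_of_le_one_right (norm_nonneg _) he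

end ContinuousMap

section Balls

variable {X : Type*} [PseudoMetricSpace X] {r : ℝ}

theorem symmDiff_ball_subset_preimage_dist_closedBall (x y : X) :
    ball y r ∆ ball x r ⊆ (dist · x) ⁻¹' closedBall r (dist y x) := by
  intro z hz
  rw [Set.mem_preimage, mem_closedBall, Real.dist_eq, abs_le]
  have := dist_triangle z y x
  have := dist_triangle z x y
  rw [dist_comm x y] at *
  rcases hz with ⟨hzy, hzx⟩ | ⟨hzx, hzy⟩ <;>
  · simp only [mem_ball, not_lt] at hzy hzx
    constructor <;> linarith

variable [MeasurableSpace X] {μ : Measure X}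

theorem isOpenPosMeasure_of_measure_ball_pos (h : ∀ (x : X) (s : ℝ), 0 < s → 0 < μ (ball x s)) :
    μ.IsOpenPosMeasure where
  open_pos U hU := fun ⟨x, hx⟩ => by
    obtain ⟨s, hs, hsU⟩ := Metric.isOpen_iff.1 hU x hx
    exact ((h x s hs).trans_le (measure_mono hsU)).ne'

theorem iInf_measure_ball_pos [CompactSpace X] [μ.IsOpenPosMeasure] (hr : 0 < r) :
    0 < ⨅ x : X, μ (ball x r) := by
  obtain ⟨t, ht⟩ := CompactSpace.elim_nhds_subcover (fun x : X => ball x (r / 2))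
    fun x => ball_mem_nhds x (half_pos hr)
  have ht_pos : 0 < t.inf fun y => μ (ball y (r / 2)) :=
    (Finset.lt_inf_iff zero_lt_top).2 fun y _ => measure_ball_pos μ y (half_pos hr)
  refine ht_pos.trans_le (le_iInf fun x => ?_)
  obtain ⟨y, hy, hxy⟩ := Set.mem_iUnion₂.1 (ht.ge (Set.mem_univ x))
  refine (Finset.inf_le hy).trans (measure_mono fun z hz => ?_)
  rw [mem_ball] at hz hxy ⊢
  linarith [dist_triangle z y x, dist_comm x y]

theorem tendsto_measure_symmDiff_ball [OpensMeasurableSpace X] [IsFiniteMeasure μ] {x : X}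
    (hx : μ (sphere x r) = 0) : Tendsto (fun y => μ (ball y r ∆ ball x r)) (𝓝 x) (𝓝 0) := by
  have hd : Measurable (dist · x) := (continuous_id.dist continuous_const).measurable
  -- the annuli around `sphere x r` are preimages of thickenings of `{r}` under `dist · x`
  have hann : Tendsto (fun δ => μ ((dist · x) ⁻¹' cthickening δ {r})) (𝓝 0) (𝓝 0) := by
    have h := tendsto_measure_cthickening_of_isClosed (μ := μ.map (dist · x)) (s := {r})
      ⟨1, one_pos, measure_ne_top _ _⟩ isClosed_singleton
    simp only [Measure.map_apply hd isClosed_cthickening.measurableSet,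
      Measure.map_apply hd (measurableSet_singleton r)] at h
    exact hx ▸ h
  refine tendsto_of_tendsto_of_tendsto_of_le_of_le tendsto_const_nhds
    (hann.comp (tendsto_iff_dist_tendsto_zero.1 tendsto_id)) (fun _ => bot_le) fun y => ?_
  simp only [Function.comp_apply, cthickening_singleton _ dist_nonneg]
  exact measure_mono (symmDiff_ball_subset_preimage_dist_closedBall x y)

end Balls

section AveragingOperator

variable {X : Type*} [MetricSpace X] [MeasurableSpace X] {μ : Measure X} {r : ℝ}

theorem avgOp_congr_ae {u v : X → ℝ} (h : u =ᵐ[μ] v) : avgOp μ r u = avgOp μ r v := by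
  funext x
  rw [avgOp, avgOp, integral_congr_ae (ae_restrict_of_ae h)]

variable [OpensMeasurableSpace X]

variable (μ r) in
noncomputable def normalizedBallIndicator [IsFiniteMeasure μ] (x : X) : Lp ℝ 2 μ :=
  (μ.real (ball x r))⁻¹ •
    indicatorConstLp 2 (measurableSet_ball (x := x) (ε := r)) (measure_ne_top μ _) (1 : ℝ)

variable [IsFiniteMeasure μ]

theorem inner_normalizedBallIndicator (x : X) (f : Lp ℝ 2 μ) :
    inner ℝ (normalizedBallIndicator μ r x) f = avgOp μ r f x := by
  rw [normalizedBallIndicator, real_inner_smul_left, L2.inner_indicatorConstLp_one]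
  rfl

theorem norm_normalizedBallIndicator (x : X) :
    ‖normalizedBallIndicator μ r x‖ = 1 / √(μ.real (ball x r)) := by
  rw [normalizedBallIndicator, norm_smul, norm_indicatorConstLp two_ne_zero ofNat_ne_top,
    norm_inv, Real.norm_of_nonneg measureReal_nonneg, norm_one, one_mul, toReal_ofNat,
    ← Real.sqrt_eq_rpow, ← div_eq_inv_mul, Real.sqrt_div_self']

theorem continuous_measureReal_ball (hsph : ∀ x : X, μ (sphere x r) = 0) :
    Continuous fun x => μ.real (ball x r) := by
  -- `μ.real s` is the `L¹` norm of the indicator of `s`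
  have h := (continuous_indicatorConstLp_set (p := 1) (c := (1 : ℝ))
    (hs := fun x => measurableSet_ball (x := x) (ε := r)) (hμs := fun x => measure_ne_top μ _)
    one_ne_top fun x => tendsto_measure_symmDiff_ball (hsph x)).norm
  simpa [norm_indicatorConstLp one_ne_zero one_ne_top] using h

theorem continuous_normalizedBallIndicator [μ.IsOpenPosMeasure] (hr : 0 < r)
    (hsph : ∀ x : X, μ (sphere x r) = 0) : Continuous (normalizedBallIndicator μ r) :=
  ((continuous_measureReal_ball hsph).inv₀ fun x =>
      (toReal_pos (measure_ball_pos μ x hr).ne' (measure_ne_top μ _)).ne').smul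
    (continuous_indicatorConstLp_set ofNat_ne_top fun x => tendsto_measure_symmDiff_ball (hsph x))

end AveragingOperator

/-- On a compact metric measure space with fully supported `μ`, if all spheres of radius `r`
are `μ`-null, then `A_r` maps `L²(X, μ)` into `C(X)`, is a compact operator from `L²(X, μ)`
to `C(X)`, and `‖A_r‖_{L² → C(X)} ≤ m(r)^{-1/2}` where `m(r) = inf_x μ(B_r(x))`. -/
theorem avgOp_compact_into_continuous
    {X : Type*} [MetricSpace X] [CompactSpace X] [MeasurableSpace X] [BorelSpace X]
    (μ : Measure X)
    (hfull : ∀ (x : X) (s : ℝ), 0 < s → 0 < μ (Metric.ball x s))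
    (hballs : ∀ (x : X) (s : ℝ), μ (Metric.ball x s) < ⊤)
    (r : ℝ) (hr : 0 < r)
    (hsph : ∀ x : X, μ (Metric.sphere x r) = 0) :
    (∀ u : X → ℝ, MemLp u 2 μ → Continuous (avgOp μ r u)) ∧
      ∃ T : Lp ℝ 2 μ →L[ℝ] C(X, ℝ), IsCompactOperator T ∧
        (∀ u : Lp ℝ 2 μ, ∀ x : X, T u x = avgOp μ r (u : X → ℝ) x) ∧
        ‖T‖ ≤ 1 / Real.sqrt ((⨅ x : X, μ (Metric.ball x r)).toReal) := by
  have : IsLocallyFiniteMeasure μ := ⟨fun x => ⟨ball x 1, ball_mem_nhds x one_pos, hballs x 1⟩⟩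
  have : μ.IsOpenPosMeasure := isOpenPosMeasure_of_measure_ball_pos hfull
  let k : C(X, Lp ℝ 2 μ →L[ℝ] ℝ) :=
    ⟨fun x => innerSL ℝ (normalizedBallIndicator μ r x),
      (innerSL ℝ).continuous.comp (continuous_normalizedBallIndicator hr hsph)⟩
  have hk : ∀ (u : Lp ℝ 2 μ) (x : X), k.applyCLM u x = avgOp μ r u x :=
    fun u x => inner_normalizedBallIndicator x u
  refine ⟨fun u hu => ?_, k.applyCLM, k.isCompactOperator_applyCLM, hk,
    k.norm_applyCLM_le.trans <| (k.norm_le (by positivity)).2 fun x => ?_⟩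
  · rw [avgOp_congr_ae hu.coeFn_toLp.symm]
    exact funext (hk _) ▸ (k.applyCLM (hu.toLp u)).continuous
  · have hx : ⨅ y, μ (ball y r) ≤ μ (ball x r) := iInf_le _ x
    have hm : 0 < (⨅ y, μ (ball y r)).toReal :=
      toReal_pos (iInf_measure_ball_pos hr).ne' (ne_top_of_le_ne_top (measure_ne_top μ _) hx)
    rw [ContinuousMap.coe_mk, innerSL_apply_norm, norm_normalizedBallIndicator]
    exact one_div_le_one_div_of_le (Real.sqrt_pos.2 hm)
      (Real.sqrt_le_sqrt (toReal_mono (measure_ne_top μ _) hx))
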